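/- arXiv:1707.04981 — 3 statements merged into one kernel-verified Lean document; each statement's English description precedes it below -/
import Mathlib

section
/- In the finite-horizon setting with horizon N, for every Borel set S ⊆ 𝕋×𝕏 and every t ∈ 𝕋: (i) the t-section of Θⁿ(S) equals the t-section of Θ^{N−t}(S) for all n ≥ N−t, i.e. Θⁿ(S) ∩ ({t}×𝕏) = Θ^{N−t}(S) ∩ ({t}×𝕏); and (ii) the set Θ^{N−t}(S) ∩ ({t}×𝕏) does not depend on the choice of the Borel set S ⊆ 𝕋×𝕏. -/
open MeasureTheory ProbabilityTheory Set Filter Topology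
open scoped ENNReal ENat

noncomputable section

/-- The σ-algebra generated by the first `n+1` coordinates of the path space:
the natural filtration of the coordinate process at time `n`. -/
def pathSigma (𝕏 : Type*) [m : MeasurableSpace 𝕏] (n : ℕ) : MeasurableSpace (ℕ → 𝕏) :=
  ⨆ i ∈ Finset.range (n + 1), MeasurableSpace.comap (fun ω : ℕ → 𝕏 => ω i) m

/-- `Pr` is the family of laws of the time-homogeneous Markov chain with one-step
transition kernel `Q`: under `Pr x` the chain starts at `x`, and the Markov property
`Pr^x(X_{n+1} ∈ A | 𝓕_n) = Q(X_n, A)` holds. -/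
structure IsMarkovChainLaw {𝕏 : Type*} [MeasurableSpace 𝕏]
    (Pr : Kernel 𝕏 (ℕ → 𝕏)) (Q : Kernel 𝕏 𝕏) : Prop where
  start : ∀ x : 𝕏, Pr x {ω | ω 0 = x} = 1
  markov : ∀ (x : 𝕏) (n : ℕ) (B : Set (ℕ → 𝕏)), MeasurableSet[pathSigma 𝕏 n] B →
    ∀ A : Set 𝕏, MeasurableSet A →
      Pr x (B ∩ {ω | ω (n + 1) ∈ A}) = ∫⁻ ω in B, Q (ω n) A ∂(Pr x)

/-- The capped hitting time `ρ(t,x,S) = min (inf {s ≥ t+1 : (s, X_s) ∈ S}) N` along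
the path `ω`, where `ω s` represents the state `X_{t+s}` of the chain started at time `t`. -/
def hitTimeFin {𝕏 : Type*} (N t : ℕ) (S : Set (ℕ × 𝕏)) (ω : ℕ → 𝕏) : ℕ :=
  sInf {s : ℕ | (t + 1 ≤ s ∧ (s, ω (s - t)) ∈ S) ∨ s = N}

/-- The objective value `J(t, x, ρ(t,x,S)) = 𝔼^{t,x}[δ(ρ(t,x,S) − t) f(X_{ρ(t,x,S)})]`. -/
def valJFin {𝕏 : Type*} [MeasurableSpace 𝕏] (Pr : Kernel 𝕏 (ℕ → 𝕏)) (δ : ℕ → ℝ) (f : 𝕏 → ℝ)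
    (N t : ℕ) (S : Set (ℕ × 𝕏)) (x : 𝕏) : ℝ :=
  ∫ ω, δ (hitTimeFin N t S ω - t) * f (ω (hitTimeFin N t S ω - t)) ∂(Pr x)

/-- The finite-horizon operator `Θ(S) = {(t,x) ∈ 𝕋×𝕏 : f(x) ≥ J(t, x, ρ(t,x,S))}`,
where `𝕋 = {0, 1, ..., N−1}`. -/
def ΘFin {𝕏 : Type*} [MeasurableSpace 𝕏] (Pr : Kernel 𝕏 (ℕ → 𝕏)) (δ : ℕ → ℝ) (f : 𝕏 → ℝ)
    (N : ℕ) (S : Set (ℕ × 𝕏)) : Set (ℕ × 𝕏) :=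
  {p | p.1 < N ∧ valJFin Pr δ f N p.1 S p.2 ≤ f p.2}

lemma hitTimeFin_congr {𝕏 : Type*} (N t : ℕ) (S S' : Set (ℕ × 𝕏))
    (h : ∀ s x, t + 1 ≤ s → s < N → ((s, x) ∈ S ↔ (s, x) ∈ S')) (ω : ℕ → 𝕏) :
    hitTimeFin N t S ω = hitTimeFin N t S' ω := by
  unfold hitTimeFin
  have key : ∀ (A B : Set (ℕ × 𝕏)),
      (∀ s x, t + 1 ≤ s → s < N → ((s, x) ∈ A → (s, x) ∈ B)) →
      sInf {s | (t + 1 ≤ s ∧ (s, ω (s - t)) ∈ B) ∨ s = N} ≤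
        sInf {s | (t + 1 ≤ s ∧ (s, ω (s - t)) ∈ A) ∨ s = N} := by
    intro A B hAB
    have hne : {s | (t + 1 ≤ s ∧ (s, ω (s - t)) ∈ A) ∨ s = N}.Nonempty := ⟨N, Or.inr rfl⟩
    have hmem := Nat.sInf_mem hne
    set a := sInf {s | (t + 1 ≤ s ∧ (s, ω (s - t)) ∈ A) ∨ s = N} with ha
    have haN : a ≤ N := Nat.sInf_le (Or.inr rfl)
    rcases hmem with ⟨hs1, hs2⟩ | hEq
    · rcases eq_or_lt_of_le haN with hEq | hlt
      · exact hEq ▸ Nat.sInf_le (Or.inr rfl)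
      · exact Nat.sInf_le (Or.inl ⟨hs1, hAB _ _ hs1 hlt hs2⟩)
    · exact hEq ▸ Nat.sInf_le (Or.inr rfl)
  exact le_antisymm (key S' S fun s x h1 h2 => (h s x h1 h2).mpr)
    (key S S' fun s x h1 h2 => (h s x h1 h2).mp)

lemma theta_section_congr {𝕏 : Type*} [MeasurableSpace 𝕏] (Pr : Kernel 𝕏 (ℕ → 𝕏))
    (δ : ℕ → ℝ) (f : 𝕏 → ℝ) (N : ℕ) :
    ∀ (n t : ℕ) (S S' : Set (ℕ × 𝕏)), S ⊆ {p | p.1 < N} → S' ⊆ {p | p.1 < N} →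
    (∀ s x, t + n ≤ s → s < N → ((s, x) ∈ S ↔ (s, x) ∈ S')) →
    ∀ x : 𝕏, ((t, x) ∈ (ΘFin Pr δ f N)^[n] S ↔ (t, x) ∈ (ΘFin Pr δ f N)^[n] S') := by
  intro n
  induction n with
  | zero =>
    intro t S S' hS hS' h x
    simp only [Function.iterate_zero, id]
    by_cases ht : t < N
    · exact h t x (by omega) ht
    · exact ⟨fun hx => absurd (hS hx) ht, fun hx => absurd (hS' hx) ht⟩
  | succ n ih =>
    intro t S S' hS hS' h x
    rw [Function.iterate_succ_apply', Function.iterate_succ_apply']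
    have hsec : ∀ s x', t + 1 ≤ s → s < N →
        ((s, x') ∈ (ΘFin Pr δ f N)^[n] S ↔ (s, x') ∈ (ΘFin Pr δ f N)^[n] S') := by
      intro s x' hs hsN
      exact ih s S S' hS hS' (fun s' x'' h1 h2 => h s' x'' (by omega) h2) x'
    have hval : valJFin Pr δ f N t ((ΘFin Pr δ f N)^[n] S) x =
        valJFin Pr δ f N t ((ΘFin Pr δ f N)^[n] S') x := by
      unfold valJFin
      refine integral_congr_ae (Filter.Eventually.of_forall fun ω => ?_)
      simp only [hitTimeFin_congr N t ((ΘFin Pr δ f N)^[n] S) ((ΘFin Pr δ f N)^[n] S') hsec ω]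
    simp only [ΘFin, Set.mem_setOf_eq, hval]

lemma theta_iterate_sub {𝕏 : Type*} [MeasurableSpace 𝕏] (Pr : Kernel 𝕏 (ℕ → 𝕏))
    (δ : ℕ → ℝ) (f : 𝕏 → ℝ) (N : ℕ) (S : Set (ℕ × 𝕏)) (hS : S ⊆ {p | p.1 < N}) :
    ∀ m, (ΘFin Pr δ f N)^[m] S ⊆ {p | p.1 < N} := by
  intro m
  induction m with
  | zero => simpa using hS
  | succ m ihm =>
    rw [Function.iterate_succ_apply']
    exact fun p hp => hp.1

/-- In the finite-horizon setting: (i) the `t`-section of `Θⁿ(S)` stabilizes after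
`N − t` iterations, and (ii) the stabilized section does not depend on the initial
Borel set `S ⊆ 𝕋×𝕏`. -/
theorem finite_horizon_sections
    {𝕏 : Type*} [TopologicalSpace 𝕏] [PolishSpace 𝕏] [MeasurableSpace 𝕏] [BorelSpace 𝕏]
    (Pr : Kernel 𝕏 (ℕ → 𝕏)) [IsMarkovKernel Pr] (Q : Kernel 𝕏 𝕏) [IsMarkovKernel Q]
    (hchain : IsMarkovChainLaw Pr Q)
    (f : 𝕏 → ℝ) (hf_meas : Measurable f) (hf_nonneg : ∀ x, 0 ≤ f x)
    (hf_bdd : ∃ C : ℝ, ∀ x, f x ≤ C)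
    (δ : ℕ → ℝ) (hδ_mem : ∀ k, δ k ∈ Set.Icc (0 : ℝ) 1) (hδ_anti : StrictAnti δ)
    (hδ_zero : δ 0 = 1) (hδ_lim : Tendsto δ atTop (𝓝 0))
    (N : ℕ) (hN : 0 < N)
    (S : Set (ℕ × 𝕏)) (hS : MeasurableSet S) (hSsub : S ⊆ {p : ℕ × 𝕏 | p.1 < N})
    (t : ℕ) (ht : t < N) :
    (∀ n : ℕ, N - t ≤ n →
      (ΘFin Pr δ f N)^[n] S ∩ ({t} ×ˢ (Set.univ : Set 𝕏)) =
        (ΘFin Pr δ f N)^[N - t] S ∩ ({t} ×ˢ (Set.univ : Set 𝕏))) ∧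
    (∀ S' : Set (ℕ × 𝕏), MeasurableSet S' → S' ⊆ {p : ℕ × 𝕏 | p.1 < N} →
      (ΘFin Pr δ f N)^[N - t] S ∩ ({t} ×ˢ (Set.univ : Set 𝕏)) =
        (ΘFin Pr δ f N)^[N - t] S' ∩ ({t} ×ˢ (Set.univ : Set 𝕏))) := by

  set Θ := ΘFin Pr δ f N with hΘ
  have key : ∀ (A B : Set (ℕ × 𝕏)), A ⊆ {p : ℕ × 𝕏 | p.1 < N} → B ⊆ {p : ℕ × 𝕏 | p.1 < N} →
      Θ^[N - t] A ∩ ({t} ×ˢ (Set.univ : Set 𝕏)) = Θ^[N - t] B ∩ ({t} ×ˢ (Set.univ : Set 𝕏)) := by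
    intro A B hA hB
    ext ⟨s, x⟩
    simp only [Set.mem_inter_iff, Set.mem_prod, Set.mem_singleton_iff, Set.mem_univ, and_true]
    constructor
    · rintro ⟨hmem, hst⟩
      subst hst
      refine ⟨?_, rfl⟩
      exact (theta_section_congr Pr δ f N (N - s) s A B hA hB
        (fun s' x' h1 h2 => by omega) x).mp hmem
    · rintro ⟨hmem, hst⟩
      subst hst
      refine ⟨?_, rfl⟩
      exact (theta_section_congr Pr δ f N (N - s) s A B hA hB
        (fun s' x' h1 h2 => by omega) x).mpr hmem
  constructor
  · intro n hn
    have hdecomp : n = (N - t) + (n - (N - t)) := by omega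
    rw [hdecomp, Function.iterate_add_apply]
    exact key _ _ (theta_iterate_sub Pr δ f N S hSsub _) hSsub
  · intro S' _ hS'sub
    exact key S S' hSsub hS'sub


end
end

section
/- Consider the two-state Markov chain on 𝕏 = {1,2} with transition probabilities P(X_{t+1}=1 | X_t=1) = P(X_{t+1}=2 | X_t=1) = 1/2 and P(X_{t+1}=2 | X_t=2) = 1, and payoff f(x) = x. If the discount function δ : ℕ → [0,1] is strictly decreasing with δ(0) = 1, δ(1) = 3/4, lim_{k→∞} δ(k) = 0, and satisfies 3/4 + 2·Σ_{k=2}^∞ (1/2)^k δ(k) < 1, then there exists no equilibrium: no Borel set S ⊆ {1,2} satisfies Θ(S) = S. -/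
/-! Started at 2 the chain never leaves 2; started at 1 it stays in `{1, 2}` and jumps to 2 at a
geometric time `ρ` with `P(ρ = k) = 2⁻ᵏ`. Hence `J(·, ρ(∅)) = 0`, `J(2, ρ({1})) = 0`,
`J(1, ρ({2})) = 2 ∑_{k ≥ 1} 2⁻ᵏ δ(k) < 1` by the decay assumption, and
`J(1, ρ({1, 2})) = δ(1) (1/2 · 1 + 1/2 · 2) = 9/8 > 1`. So `1 ∈ Θ(∅)`, `2 ∈ Θ({1})`,
`1 ∈ Θ({2})` and `1 ∉ Θ({1, 2})`: no subset of `{1, 2}` is a fixed point of `Θ`. -/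

open MeasureTheory ProbabilityTheory Set Filter Topology
open scoped ENNReal ENat

noncomputable section

/-- The first hitting time `ρ(x,S) = inf {t ≥ 1 : X_t ∈ S}` along the path `ω`
(equal to `⊤` if `S` is never reached at a time `≥ 1`). -/
def hitTime {𝕏 : Type*} (S : Set 𝕏) (ω : ℕ → 𝕏) : ℕ∞ :=
  sInf {n : ℕ∞ | ∃ t : ℕ, n = (t : ℕ∞) ∧ 1 ≤ t ∧ ω t ∈ S}

/-- The discounted payoff `δ(ρ(x,S)) f(X_{ρ(x,S)})` collected along the path `ω`,
with the convention that it vanishes when `S` is never hit. -/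
def stopPayoff {𝕏 : Type*} (δ : ℕ → ℝ) (f : 𝕏 → ℝ) (S : Set 𝕏) (ω : ℕ → 𝕏) : ℝ :=
  if hitTime S ω = ⊤ then 0
  else δ (hitTime S ω).toNat * f (ω (hitTime S ω).toNat)

/-- The objective value `J(x, ρ(x,S)) = 𝔼^x[δ(ρ(x,S)) f(X_{ρ(x,S)})]`. -/
def valJ {𝕏 : Type*} [MeasurableSpace 𝕏] (Pr : Kernel 𝕏 (ℕ → 𝕏)) (δ : ℕ → ℝ) (f : 𝕏 → ℝ)
    (S : Set 𝕏) (x : 𝕏) : ℝ :=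
  ∫ ω, stopPayoff δ f S ω ∂(Pr x)

/-- The operator `Θ(S) = {x ∈ 𝕏 : f(x) ≥ J(x, ρ(x,S))}`. -/
def Θ {𝕏 : Type*} [MeasurableSpace 𝕏] (Pr : Kernel 𝕏 (ℕ → 𝕏)) (δ : ℕ → ℝ) (f : 𝕏 → ℝ)
    (S : Set 𝕏) : Set 𝕏 :=
  {x | valJ Pr δ f S x ≤ f x}

/-- A Borel set `S ⊆ 𝕏` is an equilibrium if `Θ(S) = S`. -/
def IsEquilibrium {𝕏 : Type*} [MeasurableSpace 𝕏] (Pr : Kernel 𝕏 (ℕ → 𝕏)) (δ : ℕ → ℝ)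
    (f : 𝕏 → ℝ) (S : Set 𝕏) : Prop :=
  MeasurableSet S ∧ Θ Pr δ f S = S

/-- The value `V(x,S) = max (f x) (J(x, ρ(x,S)))` associated with an equilibrium `S`. -/
def valV {𝕏 : Type*} [MeasurableSpace 𝕏] (Pr : Kernel 𝕏 (ℕ → 𝕏)) (δ : ℕ → ℝ) (f : 𝕏 → ℝ)
    (S : Set 𝕏) (x : 𝕏) : ℝ :=
  max (f x) (valJ Pr δ f S x)

section HitTime

variable {𝕏 : Type*} {S : Set 𝕏} {ω : ℕ → 𝕏} {δ : ℕ → ℝ} {f : 𝕏 → ℝ}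

lemma hitTime_eq_top_iff : hitTime S ω = ⊤ ↔ ∀ t, 1 ≤ t → ω t ∉ S := by
  simp only [hitTime, sInf_eq_top, Set.mem_ofPred_eq]
  constructor
  · exact fun h t ht hS => ENat.natCast_ne_top t (h t ⟨t, rfl, ht, hS⟩)
  · rintro h _ ⟨t, rfl, ht, hS⟩
    exact absurd hS (h t ht)

lemma hitTime_eq_coe_iff {k : ℕ} :
    hitTime S ω = k ↔ 1 ≤ k ∧ ω k ∈ S ∧ ∀ t, 1 ≤ t → t < k → ω t ∉ S := by
  constructor
  · intro h
    have hne : hitTime S ω ≠ ⊤ := h ▸ ENat.natCast_ne_top k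
    obtain ⟨t, ht, h1, hS⟩ : hitTime S ω ∈ {n : ℕ∞ | ∃ t : ℕ, n = t ∧ 1 ≤ t ∧ ω t ∈ S} :=
      csInf_mem (Set.nonempty_iff_ne_empty.mpr fun he => hne (by rw [hitTime, he, sInf_empty]))
    obtain rfl : t = k := by exact_mod_cast ht.symm.trans h
    refine ⟨h1, hS, fun s hs1 hst hsS => ?_⟩
    have : hitTime S ω ≤ s := sInf_le ⟨s, rfl, hs1, hsS⟩
    rw [h, Nat.cast_le] at this
    omega
  · rintro ⟨h1, hS, hmin⟩
    refine le_antisymm (sInf_le ⟨k, rfl, h1, hS⟩) (le_sInf ?_)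
    rintro _ ⟨t, rfl, ht, htS⟩
    exact Nat.cast_le.mpr (not_lt.mp fun htk => hmin t ht htk htS)

lemma hitTime_eq_one_iff : hitTime S ω = 1 ↔ ω 1 ∈ S := by
  rw [← Nat.cast_one, hitTime_eq_coe_iff]
  exact ⟨fun h => h.2.1, fun h => ⟨le_rfl, h, fun t ht1 ht => absurd ht (not_lt.mpr ht1)⟩⟩

lemma stopPayoff_of_forall_notMem (h : ∀ t, 1 ≤ t → ω t ∉ S) : stopPayoff δ f S ω = 0 :=
  if_pos (hitTime_eq_top_iff.mpr h)

lemma stopPayoff_of_mem_one (h : ω 1 ∈ S) : stopPayoff δ f S ω = δ 1 * f (ω 1) := by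
  simp [stopPayoff, hitTime_eq_one_iff.mpr h]

lemma stopPayoff_singleton_eq_tsum (s : 𝕏) (ω : ℕ → 𝕏) :
    stopPayoff δ f {s} ω =
      ∑' k : ℕ, {ω | hitTime {s} ω = (k + 1 : ℕ)}.indicator (fun _ => δ (k + 1) * f s) ω := by
  by_cases h : hitTime {s} ω = ⊤
  · rw [stopPayoff, if_pos h, eq_comm]
    refine (tsum_congr fun k => ?_).trans tsum_zero
    exact Set.indicator_of_notMem (fun hk => ENat.natCast_ne_top (k + 1) (hk.symm.trans h)) _
  · obtain ⟨n, hn⟩ := ENat.ne_top_iff_exists.mp h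
    obtain ⟨hn1, hs, -⟩ := hitTime_eq_coe_iff.mp hn.symm
    obtain ⟨k, rfl⟩ := Nat.exists_eq_add_of_le' hn1
    have hmem (j : ℕ) : ω ∈ {ω | hitTime {s} ω = (j + 1 : ℕ)} ↔ j = k := by
      simp only [Set.mem_ofPred_eq, ← hn, Nat.cast_inj, Nat.add_right_cancel_iff, eq_comm]
    rw [tsum_eq_single k fun j hj => Set.indicator_of_notMem (mt (hmem j).mp hj) _,
      Set.indicator_of_mem ((hmem k).mpr rfl), stopPayoff, if_neg h, ← hn, ENat.toNat_natCast,
      Set.mem_singleton_iff.mp hs]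

lemma measurableSet_hitTime_eq [MeasurableSpace 𝕏] (hS : MeasurableSet S) (k : ℕ) :
    MeasurableSet {ω : ℕ → 𝕏 | hitTime S ω = k} := by
  simp only [hitTime_eq_coe_iff, Set.ofPred_and, Set.ofPred_forall]
  exact .inter (.const _) <| (measurable_pi_apply k hS).inter <|
    .iInter fun t => .iInter fun _ => .iInter fun _ => (measurable_pi_apply t hS).compl

end HitTime

section PathSpace

variable {𝕏 : Type*} [MeasurableSpace 𝕏]

lemma pathSigma_le (n : ℕ) : pathSigma 𝕏 n ≤ MeasurableSpace.pi :=
  iSup₂_le fun i _ => (measurable_pi_apply i).comap_le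

lemma measurableSet_pathSigma_eval_preimage {i n : ℕ} (hi : i ≤ n) {A : Set 𝕏}
    (hA : MeasurableSet A) : MeasurableSet[pathSigma 𝕏 n] {ω | ω i ∈ A} := by
  have hle : MeasurableSpace.comap (fun ω : ℕ → 𝕏 => ω i) ‹_› ≤ pathSigma 𝕏 n :=
    le_iSup₂ (f := fun j (_ : j ∈ Finset.range (n + 1)) =>
      MeasurableSpace.comap (fun ω : ℕ → 𝕏 => ω j) ‹_›) i (Finset.mem_range_succ_iff.mpr hi)
  exact hle _ ⟨A, hA, rfl⟩

lemma measurableSet_pathSigma_forall_le_mem (n : ℕ) {A : Set 𝕏} (hA : MeasurableSet A) :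
    MeasurableSet[pathSigma 𝕏 n] {ω | ∀ t ≤ n, ω t ∈ A} := by
  simp only [Set.ofPred_forall]
  exact .iInter fun t => .iInter fun ht => measurableSet_pathSigma_eval_preimage ht hA

end PathSpace

namespace IsMarkovChainLaw

variable {𝕏 : Type*} [MeasurableSpace 𝕏] {Pr : Kernel 𝕏 (ℕ → 𝕏)} {Q : Kernel 𝕏 𝕏}
  {A : Set 𝕏} {x : 𝕏}

lemma measure_inter_eval_succ_mem (h : IsMarkovChainLaw Pr Q) (x : 𝕏) {n : ℕ}
    {B : Set (ℕ → 𝕏)} (hB : MeasurableSet[pathSigma 𝕏 n] B) (hA : MeasurableSet A) {c : ℝ≥0∞}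
    (hc : ∀ ω ∈ B, Q (ω n) A = c) :
    Pr x (B ∩ {ω | ω (n + 1) ∈ A}) = c * Pr x B := by
  rw [h.markov x n B hB A hA, setLIntegral_congr_fun (pathSigma_le n B hB) hc,
    setLIntegral_const]

lemma measure_forall_le_mem [IsMarkovKernel Pr] (h : IsMarkovChainLaw Pr Q)
    (hA : MeasurableSet A) {c : ℝ≥0∞} (hQA : ∀ y ∈ A, Q y A = c) (hx : x ∈ A) (n : ℕ) :
    Pr x {ω | ∀ t ≤ n, ω t ∈ A} = c ^ n := by
  induction n with
  | zero =>
    rw [pow_zero]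
    refine le_antisymm prob_le_one ((h.start x).symm.le.trans (measure_mono fun ω hω t ht => ?_))
    rwa [Nat.le_zero.mp ht, hω]
  | succ n ih =>
    have hsucc : {ω : ℕ → 𝕏 | ∀ t ≤ n + 1, ω t ∈ A} =
        {ω | ∀ t ≤ n, ω t ∈ A} ∩ {ω | ω (n + 1) ∈ A} := by
      ext ω
      simp only [Set.mem_inter_iff, Set.mem_ofPred_eq, Nat.le_succ_iff_eq_or_le]
      grind
    rw [hsucc, h.measure_inter_eval_succ_mem x (measurableSet_pathSigma_forall_le_mem n hA) hA
      fun ω hω => hQA _ (hω n le_rfl), ih, pow_succ']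

lemma ae_forall_mem [IsMarkovKernel Pr] (h : IsMarkovChainLaw Pr Q) (hA : MeasurableSet A)
    (hQA : ∀ y ∈ A, Q y A = 1) (hx : x ∈ A) : ∀ᵐ ω ∂Pr x, ∀ t, ω t ∈ A := by
  have hn (n : ℕ) : ∀ᵐ ω ∂Pr x, ∀ t ≤ n, ω t ∈ A := by
    refine (mem_ae_iff_prob_eq_one ?_).mpr ?_
    · exact pathSigma_le n _ (measurableSet_pathSigma_forall_le_mem n hA)
    · rw [h.measure_forall_le_mem hA hQA hx, one_pow]
  filter_upwards [ae_all_iff.mpr hn] with ω hω t using hω t t le_rfl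

lemma ae_eval_zero [IsMarkovKernel Pr] [MeasurableSingletonClass 𝕏] (h : IsMarkovChainLaw Pr Q)
    (x : 𝕏) : ∀ᵐ ω ∂Pr x, ω 0 = x := by
  have hB : MeasurableSet {ω : ℕ → 𝕏 | ω 0 = x} :=
    (measurableSet_singleton x).preimage (measurable_pi_apply 0)
  exact (mem_ae_iff_prob_eq_one hB).mpr (h.start x)

lemma map_eval_one [IsMarkovKernel Pr] [MeasurableSingletonClass 𝕏] (h : IsMarkovChainLaw Pr Q)
    (x : 𝕏) : (Pr x).map (fun ω => ω 1) = Q x := by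
  ext A hA
  rw [Measure.map_apply (measurable_pi_apply 1) hA]
  have hstart : MeasurableSet[pathSigma 𝕏 0] {ω | ω 0 ∈ ({x} : Set 𝕏)} :=
    measurableSet_pathSigma_eval_preimage le_rfl (measurableSet_singleton x)
  have hx1 : Pr x {ω | ω 0 ∈ ({x} : Set 𝕏)} = 1 := h.start x
  have hstep := h.measure_inter_eval_succ_mem x hstart hA fun ω hω => by
    rw [Set.mem_singleton_iff.mp hω]
  rwa [Set.inter_comm, measure_inter_conull ((prob_compl_eq_zero_iff (pathSigma_le 0 _ hstart)).mpr
    hx1), hx1, mul_one] at hstep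

end IsMarkovChainLaw

section ObjectiveValue

variable {𝕏 : Type*} [MeasurableSpace 𝕏] {Pr : Kernel 𝕏 (ℕ → 𝕏)} {δ : ℕ → ℝ} {f : 𝕏 → ℝ}
  {S : Set 𝕏} {x : 𝕏}

lemma valJ_eq_zero_of_ae_forall_notMem (h : ∀ᵐ ω ∂Pr x, ∀ t, 1 ≤ t → ω t ∉ S) :
    valJ Pr δ f S x = 0 :=
  (integral_congr_ae (h.mono fun _ hω => stopPayoff_of_forall_notMem hω)).trans (integral_zero _ _)

lemma valJ_eq_of_ae_eval_one_mem [IsMarkovKernel Pr] [MeasurableSingletonClass 𝕏] {Q : Kernel 𝕏 𝕏}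
    (h : IsMarkovChainLaw Pr Q) (hf : Measurable f) (hS : ∀ᵐ ω ∂Pr x, ω 1 ∈ S) :
    valJ Pr δ f S x = δ 1 * ∫ y, f y ∂Q x := by
  rw [valJ, integral_congr_ae (hS.mono fun _ hω => stopPayoff_of_mem_one hω), integral_const_mul,
    ← h.map_eval_one x, integral_map (measurable_pi_apply 1).aemeasurable hf.aestronglyMeasurable]

lemma valJ_singleton_eq_tsum [IsFiniteKernel Pr] [MeasurableSingletonClass 𝕏]
    (hδ : ∀ k, δ k ∈ Set.Icc 0 1) (s : 𝕏) :
    valJ Pr δ f {s} x =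
      ∑' k : ℕ, (Pr x).real {ω | hitTime {s} ω = (k + 1 : ℕ)} * (δ (k + 1) * f s) := by
  set E : ℕ → Set (ℕ → 𝕏) := fun k => {ω | hitTime {s} ω = (k + 1 : ℕ)}
  have hE (k : ℕ) : MeasurableSet (E k) := measurableSet_hitTime_eq (measurableSet_singleton s) _
  have hdisj : Pairwise fun i j => Disjoint (E i) (E j) := fun i j hij =>
    Set.disjoint_left.mpr fun ω hi hj => hij (by simpa [E] using hi.symm.trans hj)
  have hnorm (k : ℕ) : ∫ ω, ‖(E k).indicator (fun _ => δ (k + 1) * f s) ω‖ ∂Pr x ≤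
      (Pr x).real (E k) * |f s| := by
    simp only [norm_indicator_eq_indicator_norm, integral_indicator_const _ (hE k), smul_eq_mul,
      Real.norm_eq_abs, abs_mul, abs_of_nonneg (hδ (k + 1)).1]
    exact mul_le_mul_of_nonneg_left
      (mul_le_of_le_one_left (abs_nonneg _) (hδ (k + 1)).2) measureReal_nonneg
  rw [valJ, funext (stopPayoff_singleton_eq_tsum s),
    ← integral_tsum_of_summable_integral_norm (fun k => (integrable_const _).indicator (hE k))
      (((summable_measure_toReal hE hdisj).mul_right _).of_nonneg_of_le
        (fun _ => integral_nonneg fun _ => norm_nonneg _) hnorm)]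
  simp only [E, integral_indicator_const _ (hE _), smul_eq_mul]

end ObjectiveValue

section TwoStateChain

variable {Pr : Kernel ℕ (ℕ → ℕ)} [IsMarkovKernel Pr] {Q : Kernel ℕ ℕ}

lemma ae_forall_eq_two (hchain : IsMarkovChainLaw Pr Q) (hQ2 : Q 2 = Measure.dirac 2) :
    ∀ᵐ ω ∂Pr 2, ∀ t, ω t = 2 :=
  hchain.ae_forall_mem (measurableSet_singleton 2)
    (fun y hy => by simp [Set.mem_singleton_iff.mp hy, hQ2]) rfl

lemma ae_forall_mem_one_two (hchain : IsMarkovChainLaw Pr Q)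
    (hQ1 : Q 1 = (1 / 2 : ℝ≥0∞) • Measure.dirac 1 + (1 / 2 : ℝ≥0∞) • Measure.dirac 2)
    (hQ2 : Q 2 = Measure.dirac 2) :
    ∀ᵐ ω ∂Pr 1, ∀ t, ω t ∈ ({1, 2} : Set ℕ) :=
  hchain.ae_forall_mem (Set.toFinite _).measurableSet
    (by rintro y (rfl | rfl) <;> simp [hQ1, hQ2, ENNReal.inv_two_add_inv_two]) (by simp)

lemma measure_hitTime_two_eq (hchain : IsMarkovChainLaw Pr Q)
    (hQ1 : Q 1 = (1 / 2 : ℝ≥0∞) • Measure.dirac 1 + (1 / 2 : ℝ≥0∞) • Measure.dirac 2)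
    (hQ2 : Q 2 = Measure.dirac 2) (k : ℕ) :
    Pr 1 {ω | hitTime {2} ω = (k + 1 : ℕ)} = (1 / 2) ^ (k + 1) := by
  have hae : ({ω | hitTime {2} ω = (k + 1 : ℕ)} : Set (ℕ → ℕ)) =ᵐ[Pr 1]
      ({ω | ∀ t ≤ k, ω t ∈ ({1} : Set ℕ)} ∩ {ω | ω (k + 1) ∈ ({2} : Set ℕ)} : Set (ℕ → ℕ)) := by
    refine eventuallyEq_set.mpr ?_
    filter_upwards [hchain.ae_eval_zero 1, ae_forall_mem_one_two hchain hQ1 hQ2] with ω h0 hω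
    simp only [Set.mem_insert_iff, Set.mem_singleton_iff] at hω
    simp only [Set.mem_ofPred_eq, Set.mem_inter_iff, hitTime_eq_coe_iff, Set.mem_singleton_iff]
    constructor
    · rintro ⟨-, h2, hmin⟩
      refine ⟨fun t ht => ?_, h2⟩
      rcases Nat.eq_zero_or_pos t with rfl | ht0
      · exact h0
      · exact (hω t).resolve_right (hmin t ht0 (by omega))
    · rintro ⟨h1, h2⟩
      exact ⟨by omega, h2, fun t _ ht => by simp [h1 t (by omega)]⟩
  have hQ11 : ∀ y ∈ ({1} : Set ℕ), Q y {1} = 1 / 2 := by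
    rintro y rfl
    simp [hQ1]
  rw [measure_congr hae, hchain.measure_inter_eval_succ_mem 1
      (measurableSet_pathSigma_forall_le_mem k (measurableSet_singleton 1))
      (measurableSet_singleton 2) (c := 1 / 2) fun ω hω => by
      simp [Set.mem_singleton_iff.mp (hω k le_rfl), hQ1],
    hchain.measure_forall_le_mem (measurableSet_singleton 1) hQ11 rfl, pow_succ']

lemma integral_natCast_Q_one
    (hQ1 : Q 1 = (1 / 2 : ℝ≥0∞) • Measure.dirac 1 + (1 / 2 : ℝ≥0∞) • Measure.dirac 2) :
    ∫ y, (y : ℝ) ∂Q 1 = 3 / 2 := by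
  rw [hQ1, integral_add_measure, integral_smul_measure, integral_smul_measure, integral_dirac,
    integral_dirac]
  · norm_num
  all_goals exact (integrable_dirac (by simp)).smul_measure (by simp)

lemma valJ_pair_one (hchain : IsMarkovChainLaw Pr Q)
    (hQ1 : Q 1 = (1 / 2 : ℝ≥0∞) • Measure.dirac 1 + (1 / 2 : ℝ≥0∞) • Measure.dirac 2)
    (hQ2 : Q 2 = Measure.dirac 2) (δ : ℕ → ℝ) :
    valJ Pr δ (fun y => (y : ℝ)) {1, 2} 1 = δ 1 * (3 / 2) := by
  rw [valJ_eq_of_ae_eval_one_mem hchain measurable_from_nat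
    ((ae_forall_mem_one_two hchain hQ1 hQ2).mono fun _ hω => hω 1), integral_natCast_Q_one hQ1]

lemma valJ_singleton_two_one (hchain : IsMarkovChainLaw Pr Q)
    (hQ1 : Q 1 = (1 / 2 : ℝ≥0∞) • Measure.dirac 1 + (1 / 2 : ℝ≥0∞) • Measure.dirac 2)
    (hQ2 : Q 2 = Measure.dirac 2) {δ : ℕ → ℝ} (hδ : ∀ k, δ k ∈ Set.Icc 0 1) :
    valJ Pr δ (fun y => (y : ℝ)) {2} 1 = ∑' k : ℕ, (1 / 2 : ℝ) ^ (k + 1) * (δ (k + 1) * 2) := by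
  rw [valJ_singleton_eq_tsum hδ]
  refine tsum_congr fun k => ?_
  rw [measureReal_def, measure_hitTime_two_eq hchain hQ1 hQ2 k]
  norm_num

end TwoStateChain

lemma tsum_half_pow_mul_lt_one {δ : ℕ → ℝ} (hδ : ∀ k, δ k ∈ Set.Icc 0 1) (hδ_one : δ 1 = 3 / 4)
    (hδ_fast : (3 / 4 : ℝ) + 2 * ∑' k : ℕ, (1 / 2 : ℝ) ^ (k + 2) * δ (k + 2) < 1) :
    ∑' k : ℕ, (1 / 2 : ℝ) ^ (k + 1) * (δ (k + 1) * 2) < 1 := by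
  have hsum : Summable fun k : ℕ => (1 / 2 : ℝ) ^ (k + 1) * (δ (k + 1) * 2) := by
    refine summable_geometric_two.of_nonneg_of_le
      (fun k => mul_nonneg (by positivity) (by linarith [(hδ (k + 1)).1])) fun k => ?_
    calc (1 / 2 : ℝ) ^ (k + 1) * (δ (k + 1) * 2) ≤ (1 / 2) ^ (k + 1) * 2 := by
          gcongr
          linarith [(hδ (k + 1)).2]
      _ = (1 / 2) ^ k := by ring
  rw [hsum.tsum_eq_zero_add]
  convert hδ_fast using 2
  · norm_num [hδ_one]
  · rw [← tsum_mul_left]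
    exact tsum_congr fun k => by ring

theorem no_equilibrium_example_general
    (Pr : Kernel ℕ (ℕ → ℕ)) [IsMarkovKernel Pr] (Q : Kernel ℕ ℕ)
    (hchain : IsMarkovChainLaw Pr Q)
    (hQ1 : Q 1 = (1 / 2 : ℝ≥0∞) • Measure.dirac 1 + (1 / 2 : ℝ≥0∞) • Measure.dirac 2)
    (hQ2 : Q 2 = Measure.dirac 2)
    (δ : ℕ → ℝ) (hδ_mem : ∀ k, δ k ∈ Set.Icc (0 : ℝ) 1)
    (hδ_one : δ 1 = 3 / 4)
    (hδ_fast : (3 / 4 : ℝ) + 2 * ∑' k : ℕ, (1 / 2 : ℝ) ^ (k + 2) * δ (k + 2) < 1) :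
    ∀ S : Set ℕ, S ⊆ {1, 2} →
      ¬ ({x ∈ ({1, 2} : Set ℕ) | valJ Pr δ (fun y => (y : ℝ)) S x ≤ (x : ℝ)} = S) := by
  intro S hS heq
  have hΘ (x : ℕ) (hx : x ∈ ({1, 2} : Set ℕ)) : valJ Pr δ (fun y => (y : ℝ)) S x ≤ x ↔ x ∈ S :=
    (and_iff_right hx).symm.trans (Set.ext_iff.mp heq x)
  rcases Set.subset_pair_iff_eq.mp hS with rfl | rfl | rfl | rfl
  · refine (hΘ 1 (by simp)).mp ?_
    rw [valJ_eq_zero_of_ae_forall_notMem (ae_of_all _ fun _ _ _ => id)]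
    norm_num
  · refine absurd ((hΘ 2 (by simp)).mp ?_) (by simp)
    rw [valJ_eq_zero_of_ae_forall_notMem ((ae_forall_eq_two hchain hQ2).mono fun ω hω t _ => by
      simp [hω t])]
    norm_num
  · refine absurd ((hΘ 1 (by simp)).mp ?_) (by simp)
    rw [valJ_singleton_two_one hchain hQ1 hQ2 hδ_mem, Nat.cast_one]
    exact (tsum_half_pow_mul_lt_one hδ_mem hδ_one hδ_fast).le
  · have := (hΘ 1 (by simp)).mpr (by simp)
    rw [valJ_pair_one hchain hQ1 hQ2, hδ_one] at this
    norm_num at this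

/-- For the two-state chain on `{1, 2}` with `f(x) = x` and `δ(1) = 3/4`, if the
discount function decays fast enough (`3/4 + 2 Σ_{k≥2} (1/2)^k δ(k) < 1`), then no
subset `S ⊆ {1,2}` is an equilibrium. -/
theorem no_equilibrium_example
    (Pr : Kernel ℕ (ℕ → ℕ)) [IsMarkovKernel Pr] (Q : Kernel ℕ ℕ) [IsMarkovKernel Q]
    (hchain : IsMarkovChainLaw Pr Q)
    (hQ1 : Q 1 = (1 / 2 : ℝ≥0∞) • Measure.dirac 1 + (1 / 2 : ℝ≥0∞) • Measure.dirac 2)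
    (hQ2 : Q 2 = Measure.dirac 2)
    (δ : ℕ → ℝ) (hδ_mem : ∀ k, δ k ∈ Set.Icc (0 : ℝ) 1) (hδ_anti : StrictAnti δ)
    (hδ_zero : δ 0 = 1) (hδ_one : δ 1 = 3 / 4) (hδ_lim : Tendsto δ atTop (𝓝 0))
    (hδ_fast : (3 / 4 : ℝ) + 2 * ∑' k : ℕ, (1 / 2 : ℝ) ^ (k + 2) * δ (k + 2) < 1) :
    ∀ S : Set ℕ, S ⊆ {1, 2} →
      ¬ ({x ∈ ({1, 2} : Set ℕ) | valJ Pr δ (fun y => (y : ℝ)) S x ≤ (x : ℝ)} = S) :=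
  no_equilibrium_example_general Pr Q hchain hQ1 hQ2 δ hδ_mem hδ_one hδ_fast

end
end

section
/- If S* ∈ ℰ is an optimal equilibrium, then S* = ∩_{S∈ℰ} S; in particular, an optimal equilibrium, if it exists, is unique. -/
open MeasureTheory ProbabilityTheory Set Filter Topology
open scoped ENNReal ENat

noncomputable section

/-- If `S*` is an optimal equilibrium then `S* = ⋂_{S ∈ ℰ} S`; in particular an
optimal equilibrium, if it exists, is unique. -/
theorem optimal_equilibrium_unique
    {𝕏 : Type*} [TopologicalSpace 𝕏] [PolishSpace 𝕏] [MeasurableSpace 𝕏] [BorelSpace 𝕏]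
    (Pr : Kernel 𝕏 (ℕ → 𝕏)) [IsMarkovKernel Pr] (Q : Kernel 𝕏 𝕏) [IsMarkovKernel Q]
    (hchain : IsMarkovChainLaw Pr Q)
    (f : 𝕏 → ℝ) (hf_meas : Measurable f) (hf_nonneg : ∀ x, 0 ≤ f x)
    (hf_bdd : ∃ C : ℝ, ∀ x, f x ≤ C)
    (δ : ℕ → ℝ) (hδ_mem : ∀ k, δ k ∈ Set.Icc (0 : ℝ) 1) (hδ_anti : StrictAnti δ)
    (hδ_zero : δ 0 = 1) (hδ_lim : Tendsto δ atTop (𝓝 0))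
    (Sstar : Set 𝕏) (hstar : IsEquilibrium Pr δ f Sstar)
    (hopt : ∀ S : Set 𝕏, IsEquilibrium Pr δ f S → ∀ x : 𝕏, valV Pr δ f S x ≤ valV Pr δ f Sstar x) :
    Sstar = ⋂₀ {S : Set 𝕏 | IsEquilibrium Pr δ f S} ∧
    ∀ T : Set 𝕏, IsEquilibrium Pr δ f T →
      (∀ S : Set 𝕏, IsEquilibrium Pr δ f S → ∀ x : 𝕏, valV Pr δ f S x ≤ valV Pr δ f T x) →
      T = Sstar := by
  -- Main step: the optimal equilibrium is contained in every equilibrium.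
  have key : ∀ S : Set 𝕏, IsEquilibrium Pr δ f S → Sstar ⊆ S := by
    intro S hS x hx
    by_contra hxS
    -- x ∈ S* = Θ(S*), so valJ S* x ≤ f x, hence valV S* x = f x.
    have hx' : valJ Pr δ f Sstar x ≤ f x := by
      have := hstar.2
      rw [← this] at hx
      exact hx
    have hVstar : valV Pr δ f Sstar x = f x := max_eq_left hx'
    -- x ∉ S = Θ(S), so f x < valJ S x, hence valV S x = valJ S x > f x.
    have hxS' : ¬ valJ Pr δ f S x ≤ f x := by
      have := hS.2
      rw [← this] at hxS
      exact hxS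
    have hlt : f x < valJ Pr δ f S x := lt_of_not_ge hxS'
    have hVS : valV Pr δ f S x = valJ Pr δ f S x := max_eq_right hlt.le
    have := hopt S hS x
    rw [hVS, hVstar] at this
    exact absurd this (not_le.mpr hlt)
  have h1 : Sstar = ⋂₀ {S : Set 𝕏 | IsEquilibrium Pr δ f S} := by
    apply subset_antisymm
    · exact subset_sInter fun S hS => key S hS
    · exact sInter_subset_of_mem hstar
  refine ⟨h1, fun T hT hTopt => ?_⟩
  have hTsub : T ⊆ Sstar := by
    -- T is optimal too, so by the same argument T ⊆ every equilibrium, in particular S*.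
    intro x hx
    by_contra hxS
    have hx' : valJ Pr δ f T x ≤ f x := by
      have := hT.2; rw [← this] at hx; exact hx
    have hVT : valV Pr δ f T x = f x := max_eq_left hx'
    have hxS' : ¬ valJ Pr δ f Sstar x ≤ f x := by
      have := hstar.2; rw [← this] at hxS; exact hxS
    have hlt : f x < valJ Pr δ f Sstar x := lt_of_not_ge hxS'
    have hVS : valV Pr δ f Sstar x = valJ Pr δ f Sstar x := max_eq_right hlt.le
    have := hTopt Sstar hstar x
    rw [hVS, hVT] at this
    exact absurd this (not_le.mpr hlt)
  exact subset_antisymm hTsub (key T hT)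

end
end
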